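/- arXiv:2605.00031 — 2 statements merged into one kernel-verified Lean document; each statement's English description precedes it below -/
import Mathlib

section
/- Let n, s, δ be positive integers with s ≡ 1 (mod 3), δ ≡ 1 (mod 3), δ + 1 ≤ s, 5s ≤ 3n − 1, and 3n ≥ 20δ + 53. Then the number of edges of K_s ∨ (K_{n−⌊5s/3⌋−1} ∪ (⌊2s/3⌋+1)·K_1) is at most the number of edges of K_δ ∨ (K_{n−⌊5δ/3⌋−1} ∪ (⌊2δ/3⌋+1)·K_1). -/
open SimpleGraph

/-- The number of isolated vertices of the induced subgraph `G - S`: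
vertices outside `S` with no neighbor outside `S`. -/
noncomputable def isolatedCount {V : Type*} (G : SimpleGraph V) (S : Finset V) : ℕ :=
  {v : V | v ∉ S ∧ ∀ w ∉ S, ¬ G.Adj v w}.ncard

/-- `G` has a `{P₃, P₄, P₅}`-factor: a spanning subgraph each of whose connected
components is isomorphic to a path on 3, 4 or 5 vertices. -/
def HasP345Factor {V : Type*} (G : SimpleGraph V) : Prop :=
  ∃ H : SimpleGraph V, H ≤ G ∧
    ∀ c : H.ConnectedComponent, ∃ k, (k = 3 ∨ k = 4 ∨ k = 5) ∧
      Nonempty ((SimpleGraph.induce c.supp H) ≃g SimpleGraph.pathGraph k)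

/-- The graph `K_s ∨ (K_{n-⌊5s/3⌋-1} ∪ (⌊2s/3⌋+1)·K_1)` on `n` vertices:
vertices `< s` form the clique `K_s` joined with everything, vertices in
`[s, n - ⌊2s/3⌋ - 1)` form the clique `K_{n-⌊5s/3⌋-1}`, and the remaining
`⌊2s/3⌋ + 1` vertices are isolated in the second part of the join. -/
def extremalGraph (n s : ℕ) : SimpleGraph (Fin n) where
  Adj v w := v ≠ w ∧ ((v : ℕ) < s ∨ (w : ℕ) < s ∨
    ((v : ℕ) < n - 2 * s / 3 - 1 ∧ (w : ℕ) < n - 2 * s / 3 - 1))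
  symm := ⟨fun v w h => ⟨h.1.symm, by tauto⟩⟩
  loopless := ⟨fun v h => h.1 rfl⟩

/-- The spectral radius of a graph: the largest eigenvalue of its adjacency
matrix over the reals. -/
noncomputable def specRad {V : Type*} [Finite V] (G : SimpleGraph V) : ℝ :=
  letI := Fintype.ofFinite V
  letI := Classical.decEq V
  letI := Classical.decRel G.Adj
  sSup (spectrum ℝ (G.adjMatrix ℝ))

instance extremalGraph.instDecidableAdj (n s : ℕ) :
    DecidableRel (extremalGraph n s).Adj :=
  fun _ _ => inferInstanceAs (Decidable (_ ∧ _))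

open Finset in
lemma card_filter_val_lt (n T : ℕ) (h : T ≤ n) :
    (Finset.univ.filter (fun w : Fin n => (w : ℕ) < T)).card = T := by
  rw [Finset.card_filter]
  rw [Fin.sum_univ_eq_sum_range (fun i => if i < T then 1 else 0)]
  rw [← Finset.card_filter]
  have : (Finset.range n).filter (· < T) = Finset.range T := by
    ext i; simp only [Finset.mem_filter, Finset.mem_range]; omega
  rw [this, Finset.card_range]

open Finset in
lemma extremalGraph_deg_lo (n s : ℕ) (v : Fin n) (hv : (v : ℕ) < s) :
    (extremalGraph n s).degree v = n - 1 := by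
  rw [← SimpleGraph.card_neighborFinset_eq_degree]
  have : (extremalGraph n s).neighborFinset v = Finset.univ.erase v := by
    ext w
    rw [SimpleGraph.mem_neighborFinset]
    simp only [extremalGraph, Finset.mem_erase, Finset.mem_univ, and_true]
    constructor
    · exact fun h => h.1.symm
    · exact fun h => ⟨h.symm, Or.inl hv⟩
  rw [this, Finset.card_erase_of_mem (Finset.mem_univ v), Finset.card_univ,
    Fintype.card_fin]

open Finset in
lemma extremalGraph_deg_mid (n s : ℕ) (hsT : s ≤ n - 2 * s / 3 - 1) (v : Fin n)
    (hv1 : s ≤ (v : ℕ)) (hv2 : (v : ℕ) < n - 2 * s / 3 - 1) :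
    (extremalGraph n s).degree v = (n - 2 * s / 3 - 1) - 1 := by
  set T := n - 2 * s / 3 - 1 with hT
  rw [← SimpleGraph.card_neighborFinset_eq_degree]
  have : (extremalGraph n s).neighborFinset v
      = (Finset.univ.filter (fun w : Fin n => (w : ℕ) < T)).erase v := by
    ext w
    rw [SimpleGraph.mem_neighborFinset]
    simp only [extremalGraph, Finset.mem_erase, Finset.mem_filter, Finset.mem_univ,
      true_and]
    constructor
    · rintro ⟨hne, h | h | ⟨h1, h2⟩⟩
      · omega
      · exact ⟨hne.symm, by omega⟩
      · exact ⟨hne.symm, h2⟩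
    · rintro ⟨hne, hw⟩
      exact ⟨hne.symm, Or.inr (Or.inr ⟨hv2, hw⟩)⟩
  rw [this, Finset.card_erase_of_mem (by simpa using hv2),
    card_filter_val_lt n T (by omega)]

open Finset in
lemma extremalGraph_deg_hi (n s : ℕ) (hsT : s ≤ n - 2 * s / 3 - 1) (v : Fin n)
    (hv : n - 2 * s / 3 - 1 ≤ (v : ℕ)) :
    (extremalGraph n s).degree v = s := by
  rw [← SimpleGraph.card_neighborFinset_eq_degree]
  have : (extremalGraph n s).neighborFinset v
      = Finset.univ.filter (fun w : Fin n => (w : ℕ) < s) := by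
    ext w
    rw [SimpleGraph.mem_neighborFinset]
    simp only [extremalGraph, Finset.mem_filter, Finset.mem_univ, true_and]
    constructor
    · rintro ⟨hne, h | h | ⟨h1, h2⟩⟩ <;> omega
    · intro hw
      refine ⟨?_, Or.inr (Or.inl hw)⟩
      intro h; subst h; omega
  rw [this, card_filter_val_lt n s (by omega)]

open Finset in
lemma twice_edges (n s : ℕ) (hsT : s ≤ n - 2 * s / 3 - 1) :
    2 * (extremalGraph n s).edgeFinset.card
      = s * (n - 1) + ((n - 2 * s / 3 - 1) - s) * ((n - 2 * s / 3 - 1) - 1)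
        + (n - (n - 2 * s / 3 - 1)) * s := by
  set T := n - 2 * s / 3 - 1 with hT
  have hTn : T ≤ n := by omega
  rw [← SimpleGraph.sum_degrees_eq_twice_card_edges]
  have hdeg : ∀ v : Fin n, (extremalGraph n s).degree v
      = (fun i => if i < s then n - 1 else if i < T then T - 1 else s) (v : ℕ) := by
    intro v
    by_cases h1 : (v : ℕ) < s
    · simp only [if_pos h1]; exact extremalGraph_deg_lo n s v h1
    · by_cases h2 : (v : ℕ) < T
      · simp only [if_neg h1, if_pos h2]
        exact extremalGraph_deg_mid n s hsT v (by omega) h2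
      · simp only [if_neg h1, if_neg h2]
        exact extremalGraph_deg_hi n s hsT v (by omega)
  rw [Finset.sum_congr rfl (fun v _ => hdeg v)]
  rw [Fin.sum_univ_eq_sum_range (fun i => if i < s then n - 1 else if i < T then T - 1 else s)]
  rw [Finset.range_eq_Ico, ← Finset.sum_Ico_consecutive _ (Nat.zero_le T) hTn,
    ← Finset.sum_Ico_consecutive _ (Nat.zero_le s) hsT]
  have e1 : ∑ i ∈ Finset.Ico 0 s, (if i < s then n - 1 else if i < T then T - 1 else s)
      = s * (n - 1) := by
    rw [Finset.sum_congr rfl (fun i hi => ?_), Finset.sum_const, Nat.Ico_zero_eq_range,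
      Finset.card_range, smul_eq_mul]
    rw [if_pos (Finset.mem_Ico.mp hi).2]
  have e2 : ∑ i ∈ Finset.Ico s T, (if i < s then n - 1 else if i < T then T - 1 else s)
      = (T - s) * (T - 1) := by
    rw [Finset.sum_congr rfl (fun i hi => ?_), Finset.sum_const, Nat.card_Ico,
      smul_eq_mul]
    have := Finset.mem_Ico.mp hi
    rw [if_neg (by omega), if_pos this.2]
  have e3 : ∑ i ∈ Finset.Ico T n, (if i < s then n - 1 else if i < T then T - 1 else s)
      = (n - T) * s := by
    rw [Finset.sum_congr rfl (fun i hi => ?_), Finset.sum_const, Nat.card_Ico,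
      smul_eq_mul]
    have := Finset.mem_Ico.mp hi
    rw [if_neg (by omega), if_neg (by omega)]
  rw [e1, e2, e3]

lemma arith_key (n t d : ℕ) (hnt : 5 * t + 2 ≤ n) (hnd : 20 * d + 25 ≤ n)
    (hdt : d + 1 ≤ t) :
    (3*t+1) * (n-1) + ((n - 2*t - 1) - (3*t+1)) * ((n - 2*t - 1) - 1)
        + (n - (n - 2*t - 1)) * (3*t+1)
      ≤ (3*d+1) * (n-1) + ((n - 2*d - 1) - (3*d+1)) * ((n - 2*d - 1) - 1)
        + (n - (n - 2*d - 1)) * (3*d+1) := by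
  zify [show (1:ℕ) ≤ n by omega, show 2*t ≤ n by omega, show (1:ℕ) ≤ n - 2*t by omega,
    show 3*t+1 ≤ n - 2*t - 1 by omega, show (1:ℕ) ≤ n - 2*t - 1 by omega,
    show n - 2*t - 1 ≤ n by omega, show 2*d ≤ n by omega,
    show (1:ℕ) ≤ n - 2*d by omega, show 3*d+1 ≤ n - 2*d - 1 by omega,
    show (1:ℕ) ≤ n - 2*d - 1 by omega, show n - 2*d - 1 ≤ n by omega]
  have ha : (0:ℤ) ≤ (t : ℤ) - d := by
    have : (d:ℤ) + 1 ≤ t := by exact_mod_cast hdt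
    linarith
  have hb : (0:ℤ) ≤ (n : ℤ) - 4*t - 4*d - 4 := by
    have h3 : (5*t + 2 : ℤ) ≤ n := by exact_mod_cast hnt
    have h4 : (20*d + 25 : ℤ) ≤ n := by exact_mod_cast hnd
    linarith
  nlinarith [mul_nonneg ha hb]

theorem stmt8 (n s δ : ℕ) (hn1 : 1 ≤ n) (hs1 : 1 ≤ s) (hδ1 : 1 ≤ δ)
    (hs : s % 3 = 1) (hδ : δ % 3 = 1) (hsδ : δ + 1 ≤ s)
    (hsn : 5 * s + 1 ≤ 3 * n) (hn : 20 * δ + 53 ≤ 3 * n) :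
    (extremalGraph n s).edgeSet.ncard ≤ (extremalGraph n δ).edgeSet.ncard := by
  obtain ⟨t, ht⟩ : ∃ t, s = 3 * t + 1 := ⟨s / 3, by omega⟩
  obtain ⟨d, hd⟩ : ∃ d, δ = 3 * d + 1 := ⟨δ / 3, by omega⟩
  subst ht; subst hd
  have hTs : n - 2 * (3 * t + 1) / 3 - 1 = n - 2 * t - 1 := by omega
  have hTd : n - 2 * (3 * d + 1) / 3 - 1 = n - 2 * d - 1 := by omega
  have hnt : 5 * t + 2 ≤ n := by omega
  have hnd : 20 * d + 25 ≤ n := by omega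
  have hdt : d + 1 ≤ t := by omega
  have hsT : 3 * t + 1 ≤ n - 2 * (3 * t + 1) / 3 - 1 := by omega
  have hdT : 3 * d + 1 ≤ n - 2 * (3 * d + 1) / 3 - 1 := by omega
  have h1 := twice_edges n (3 * t + 1) hsT
  have h2 := twice_edges n (3 * d + 1) hdT
  rw [hTs] at h1
  rw [hTd] at h2
  have e1 : (extremalGraph n (3 * t + 1)).edgeSet.ncard = (extremalGraph n (3 * t + 1)).edgeFinset.card := by
    rw [← SimpleGraph.coe_edgeFinset, Set.ncard_coe_finset]
  have e2 : (extremalGraph n (3 * d + 1)).edgeSet.ncard = (extremalGraph n (3 * d + 1)).edgeFinset.card := by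
    rw [← SimpleGraph.coe_edgeFinset, Set.ncard_coe_finset]
  rw [e1, e2]
  have key := arith_key n t d hnt hnd hdt
  omega
end

section
/- Let n, s, δ be positive integers with s ≡ 2 (mod 3), δ ≡ 2 (mod 3), δ + 1 ≤ s, 5s ≤ 3n − 2, and 3n ≥ 20δ + 53. Then the number of edges of K_s ∨ (K_{n−⌊5s/3⌋−1} ∪ (⌊2s/3⌋+1)·K_1) is at most the number of edges of K_δ ∨ (K_{n−⌊5δ/3⌋−1} ∪ (⌊2δ/3⌋+1)·K_1). -/
open SimpleGraph Finset

lemma extremalGraph_adj {n s : ℕ} {v w : Fin n} :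
    (extremalGraph n s).Adj v w ↔ v ≠ w ∧ ((v : ℕ) < s ∨ (w : ℕ) < s ∨
    ((v : ℕ) < n - 2 * s / 3 - 1 ∧ (w : ℕ) < n - 2 * s / 3 - 1)) := Iff.rfl

instance (n s : ℕ) : DecidableRel (extremalGraph n s).Adj := fun v w => by
  rw [extremalGraph_adj]; infer_instance

lemma card_filter_lt (n t : ℕ) (h : t ≤ n) :
    ((univ : Finset (Fin n)).filter (fun w : Fin n => (w : ℕ) < t)).card = t := by
  have heq : ((univ : Finset (Fin n)).filter (fun w : Fin n => (w : ℕ) < t)) =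
      (univ : Finset (Fin t)).map (Fin.castLEEmb h) := by
    ext w
    simp only [mem_filter, mem_univ, true_and, Finset.mem_map]
    constructor
    · intro hw; exact ⟨⟨(w : ℕ), hw⟩, Fin.ext rfl⟩
    · rintro ⟨a, rfl⟩; simpa using a.isLt
  rw [heq, Finset.card_map, Finset.card_univ, Fintype.card_fin]

lemma degree_extremal (n s : ℕ) (hs : s % 3 = 2) (hsn : 5 * s + 2 ≤ 3 * n) (v : Fin n) :
    (extremalGraph n s).degree v =
      if (v : ℕ) < s then n - 1
      else if (v : ℕ) < n - 2 * s / 3 - 1 then (n - 2 * s / 3 - 1) - 1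
      else s := by
  have hst : s ≤ n - 2 * s / 3 - 1 := by omega
  have htn : n - 2 * s / 3 - 1 ≤ n := by omega
  rw [← SimpleGraph.card_neighborFinset_eq_degree, SimpleGraph.neighborFinset_eq_filter]
  by_cases hv : (v : ℕ) < s
  · have heq : (univ.filter ((extremalGraph n s).Adj v)) = univ.erase v := by
      ext w
      simp only [mem_filter, mem_univ, true_and, mem_erase, and_true, extremalGraph_adj, ne_eq,
        Fin.ext_iff]
      omega
    rw [heq, Finset.card_erase_of_mem (mem_univ v), Finset.card_univ, Fintype.card_fin]
    simp [hv]
  · by_cases hv2 : (v : ℕ) < n - 2 * s / 3 - 1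
    · have heq : (univ.filter ((extremalGraph n s).Adj v)) =
          (univ.filter (fun w : Fin n => (w : ℕ) < n - 2 * s / 3 - 1)).erase v := by
        ext w
        simp only [mem_filter, mem_univ, true_and, mem_erase, extremalGraph_adj, ne_eq,
          Fin.ext_iff]
        omega
      rw [heq, Finset.card_erase_of_mem (by simp [hv2]), card_filter_lt n _ htn]
      simp [hv, hv2]
    · have heq : (univ.filter ((extremalGraph n s).Adj v)) =
          univ.filter (fun w : Fin n => (w : ℕ) < s) := by
        ext w
        simp only [mem_filter, mem_univ, true_and, extremalGraph_adj, ne_eq, Fin.ext_iff]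
        omega
      rw [heq, card_filter_lt n s (by omega)]
      simp [hv, hv2]

lemma two_mul_edges (n s : ℕ) (hs : s % 3 = 2) (hsn : 5 * s + 2 ≤ 3 * n) :
    2 * (extremalGraph n s).edgeSet.ncard =
      s * (n - 1) + (n - 2 * s / 3 - 1 - s) * (n - 2 * s / 3 - 2) + (2 * s / 3 + 1) * s := by
  set t := n - 2 * s / 3 - 1 with ht
  have hst : s ≤ t := by omega
  have htn : t ≤ n := by omega
  have h1 : (extremalGraph n s).edgeSet.ncard = (extremalGraph n s).edgeFinset.card := by
    rw [Set.ncard_eq_toFinset_card']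
    congr 1
  rw [h1, ← SimpleGraph.sum_degrees_eq_twice_card_edges]
  rw [Finset.sum_congr rfl (fun v _ => degree_extremal n s hs hsn v)]
  rw [← ht]
  rw [Fin.sum_univ_eq_sum_range (fun i => if i < s then n - 1 else if i < t then t - 1 else s)]
  rw [Finset.range_eq_Ico, ← Finset.sum_Ico_consecutive _ (Nat.zero_le s) (le_trans hst htn),
    ← Finset.sum_Ico_consecutive _ hst htn]
  have e1 : ∑ i ∈ Finset.Ico 0 s, (if i < s then n - 1 else if i < t then t - 1 else s)
      = s * (n - 1) := by
    rw [Finset.sum_congr rfl (fun i hi => by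
      simp only [Finset.mem_Ico] at hi; rw [if_pos hi.2]), Finset.sum_const, Nat.card_Ico,
      smul_eq_mul]
    simp
  have e2 : ∑ i ∈ Finset.Ico s t, (if i < s then n - 1 else if i < t then t - 1 else s)
      = (t - s) * (t - 1) := by
    rw [Finset.sum_congr rfl (fun i hi => by
      simp only [Finset.mem_Ico] at hi
      rw [if_neg (by omega), if_pos hi.2]), Finset.sum_const, Nat.card_Ico, smul_eq_mul]
  have e3 : ∑ i ∈ Finset.Ico t n, (if i < s then n - 1 else if i < t then t - 1 else s)
      = (n - t) * s := by
    rw [Finset.sum_congr rfl (fun i hi => by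
      simp only [Finset.mem_Ico] at hi
      rw [if_neg (by omega), if_neg (by omega)]), Finset.sum_const, Nat.card_Ico, smul_eq_mul]
  rw [e1, e2, e3]
  have hts : t - s = n - 2 * s / 3 - 1 - s := rfl
  have hnt : n - t = 2 * s / 3 + 1 := by omega
  have ht1 : t - 1 = n - 2 * s / 3 - 2 := by omega
  rw [hts, hnt, ht1, Nat.add_assoc]

theorem stmt11 (n s δ : ℕ) (hn1 : 1 ≤ n) (hs1 : 1 ≤ s) (hδ1 : 1 ≤ δ)
    (hs : s % 3 = 2) (hδ : δ % 3 = 2) (hsδ : δ + 1 ≤ s)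
    (hsn : 5 * s + 2 ≤ 3 * n) (hn : 20 * δ + 53 ≤ 3 * n) :
    (extremalGraph n s).edgeSet.ncard ≤ (extremalGraph n δ).edgeSet.ncard := by
  have h1 := two_mul_edges n s hs hsn
  have h2 := two_mul_edges n δ hδ (by omega)
  obtain ⟨b, e, m, hb, he, hm, hsa⟩ :
      ∃ b e m, δ = 3 * b + 2 ∧ 1 ≤ e ∧ n = 5 * (b + e) + 4 + m ∧ s = 3 * (b + e) + 2 :=
    ⟨δ / 3, s / 3 - δ / 3, n - (5 * (s / 3) + 4), by omega, by omega, by omega, by omega⟩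
  have key : 6 * b + 7 ≤ 2 * m + 2 * e := by
    have h5 : 15 * b + 27 ≤ 5 * e + m := by omega
    omega
  have A1 : n - 1 = 5 * b + 5 * e + 3 + m := by omega
  have A2 : n - 2 * s / 3 - 1 - s = m := by omega
  have A3 : n - 2 * s / 3 - 2 = 3 * b + 3 * e + 1 + m := by omega
  have A4 : 2 * s / 3 + 1 = 2 * b + 2 * e + 2 := by omega
  have B2 : n - 2 * δ / 3 - 1 - δ = 5 * e + m := by omega
  have B3 : n - 2 * δ / 3 - 2 = 3 * b + 5 * e + 1 + m := by omega
  have B4 : 2 * δ / 3 + 1 = 2 * b + 2 := by omega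
  have P1 : s * (n - 1) = (3 * b + 3 * e + 2) * (5 * b + 5 * e + 3 + m) := by rw [hsa, A1]; ring
  have P2 : (n - 2 * s / 3 - 1 - s) * (n - 2 * s / 3 - 2) = m * (3 * b + 3 * e + 1 + m) := by
    rw [A2, A3]
  have P3 : (2 * s / 3 + 1) * s = (2 * b + 2 * e + 2) * (3 * b + 3 * e + 2) := by rw [A4, hsa]; ring
  have Q1 : δ * (n - 1) = (3 * b + 2) * (5 * b + 5 * e + 3 + m) := by rw [hb, A1]
  have Q2 : (n - 2 * δ / 3 - 1 - δ) * (n - 2 * δ / 3 - 2) = (5 * e + m) * (3 * b + 5 * e + 1 + m) := by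
    rw [B2, B3]
  have Q3 : (2 * δ / 3 + 1) * δ = (2 * b + 2) * (3 * b + 2) := by rw [B4, hb]
  rw [P1, P2, P3] at h1
  rw [Q1, Q2, Q3] at h2
  have main : (3 * b + 3 * e + 2) * (5 * b + 5 * e + 3 + m) + m * (3 * b + 3 * e + 1 + m) +
      (2 * b + 2 * e + 2) * (3 * b + 3 * e + 2)
      ≤ (3 * b + 2) * (5 * b + 5 * e + 3 + m) + (5 * e + m) * (3 * b + 5 * e + 1 + m) +
      (2 * b + 2) * (3 * b + 2) := by
    have h6 : ((3 * b + 3 * e + 2) * (5 * b + 5 * e + 3 + m) + m * (3 * b + 3 * e + 1 + m) +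
        (2 * b + 2 * e + 2) * (3 * b + 3 * e + 2)) + 2 * e * (6 * b + 7)
        ≤ ((3 * b + 2) * (5 * b + 5 * e + 3 + m) + (5 * e + m) * (3 * b + 5 * e + 1 + m) +
        (2 * b + 2) * (3 * b + 2)) + 2 * e * (6 * b + 7) := by
      calc ((3 * b + 3 * e + 2) * (5 * b + 5 * e + 3 + m) + m * (3 * b + 3 * e + 1 + m) +
          (2 * b + 2 * e + 2) * (3 * b + 3 * e + 2)) + 2 * e * (6 * b + 7)
          ≤ ((3 * b + 3 * e + 2) * (5 * b + 5 * e + 3 + m) + m * (3 * b + 3 * e + 1 + m) +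
          (2 * b + 2 * e + 2) * (3 * b + 3 * e + 2)) + 2 * e * (2 * m + 2 * e) :=
            Nat.add_le_add_left (mul_le_mul_right key (2 * e)) _
        _ = ((3 * b + 2) * (5 * b + 5 * e + 3 + m) + (5 * e + m) * (3 * b + 5 * e + 1 + m) +
          (2 * b + 2) * (3 * b + 2)) + 2 * e * (6 * b + 7) := by ring
    exact Nat.le_of_add_le_add_right h6
  have hle : 2 * (extremalGraph n s).edgeSet.ncard ≤ 2 * (extremalGraph n δ).edgeSet.ncard := by
    rw [h1, h2]; exact main
  omega
end
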